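/- Let K be a commutative ring, F : A → B a fully faithful K-linear functor between small K-categories, and D any K-linear category. Then the restriction functor Fun_K(F, D) : Fun_K(B, D) → Fun_K(A, D) is fully faithful provided the image of F additively generates B and D is saturated; in particular under these hypotheses precomposition with F is fully faithful on natural transformations. -/

import Mathlib

/-!
Every object `b` of `B` is a retract of a finite direct sum of objects `F aᵢ`, that is
`𝟙 b = ∑ i, πᵢ ≫ σᵢ` with `πᵢ : b ⟶ F aᵢ` and `σᵢ : F aᵢ ⟶ b`. For additive `G H : B ⥤ D` a
transformation `α : G ⟶ H` is then recovered from its restriction along `F` as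
`α_b = ∑ i, G πᵢ ≫ α_{F aᵢ} ≫ H σᵢ`; and since `F` is full, every `γ : F ⋙ G ⟶ F ⋙ H` commutes
with all morphisms between objects of the image, so the same formula extends `γ` to a natural
transformation `G ⟶ H`.
-/

open CategoryTheory CategoryTheory.Limits CategoryTheory.Idempotents Opposite TensorProduct

universe w w' v u




namespace Morita

variable (K : Type u) [CommRing K]

section OpLinear

variable {C : Type*} [Category C] [Preadditive C] [Linear K C]

instance opLinear : Linear K Cᵒᵖ where
  homModule X Y := Equiv.module K (opEquiv X Y)
  smul_comp _ _ _ _ _ _ := Quiver.Hom.unop_inj (Linear.comp_smul _ _ _ _ _ _)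
  comp_smul _ _ _ _ _ _ := Quiver.Hom.unop_inj (Linear.smul_comp _ _ _ _ _ _)

@[simp]
lemma unop_smul {X Y : Cᵒᵖ} (r : K) (f : X ⟶ Y) : (r • f).unop = r • f.unop := rfl

@[simp]
lemma op_smul {X Y : C} (r : K) (f : X ⟶ Y) : (r • f).op = r • f.op := rfl

end OpLinear

/-- The property of a functor between `K`-linear categories being `K`-linear
(which subsumes additivity). -/
def IsKLinear {A : Type*} {B : Type*} [Category A] [Category B]
    [Preadditive A] [Preadditive B] [Linear K A] [Linear K B] (F : A ⥤ B) : Prop :=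
  ∃ _ : F.Additive, F.Linear K

/-- The category `Mod A` of right `A`-modules over a `K`-category `A`:
`K`-linear functors `Aᵒᵖ ⥤ ModuleCat K`. -/
abbrev ModCat (A : Type w) [Category.{v} A] [Preadditive A] [Linear K A] :=
  ObjectProperty.FullSubcategory (fun F : Aᵒᵖ ⥤ ModuleCat.{v} K => IsKLinear K F)

variable {A : Type w} [Category.{v} A] [Preadditive A] [Linear K A]

instance linearYoneda_obj_linear (x : A) : ((linearYoneda K A).obj x).Linear K where
  map_smul {X Y} f r := by
    ext g
    show (r • f.unop) ≫ g = r • (f.unop ≫ g)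
    exact Linear.smul_comp _ _ _ r f.unop g

/-- The `K`-linear Yoneda embedding `A ⥤ Mod A`. -/
def modYoneda : A ⥤ ModCat K A :=
  ObjectProperty.lift _ (linearYoneda K A) (fun _ => ⟨inferInstance, inferInstance⟩)

/-- A functor `F : A ⥤ B` between `K`-categories is a Morita equivalence if the
extension of scalars `Mod A ⥤ Mod B` along `F`, i.e. the left Kan extension of
`F ⋙ modYoneda` along `modYoneda`, is an equivalence of categories. -/
def IsMoritaEquivalence {A : Type w} {B : Type w'} [Category.{v} A] [Category.{v} B]
    [Preadditive A] [Linear K A] [Preadditive B] [Linear K B] (F : A ⥤ B) : Prop :=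
  ∃ (E : ModCat K A ⥤ ModCat K B) (α : F ⋙ modYoneda K ⟶ modYoneda K ⋙ E),
    E.IsLeftKanExtension α ∧ E.IsEquivalence

/-- Two `K`-categories are Morita equivalent if there is a `K`-linear equivalence
between their module categories. -/
def MoritaEquivalent (A : Type w) (B : Type w') [Category.{v} A] [Category.{v} B]
    [Preadditive A] [Linear K A] [Preadditive B] [Linear K B] : Prop :=
  ∃ E : ModCat K A ⥤ ModCat K B, IsKLinear K E ∧ E.IsEquivalence

section Saturation

instance matLinear : Linear K (Mat_ A) where
  homModule M N := inferInstanceAs (Module K (∀ i j, M.X i ⟶ N.X j))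
  smul_comp M N P r f g := by
    ext i k
    show ∑ j, (r • f i j) ≫ g j k = r • ∑ j, f i j ≫ g j k
    simp [Linear.smul_comp, Finset.smul_sum]
  comp_smul M N P f r g := by
    ext i k
    show ∑ j, f i j ≫ (r • g j k) = r • ∑ j, f i j ≫ g j k
    simp [Linear.comp_smul, Finset.smul_sum]

instance karoubiLinear {C : Type*} [Category C] [Preadditive C] [Linear K C] :
    Linear K (Karoubi C) where
  homModule P Q :=
    { smul := fun r f => ⟨r • f.f, by rw [Linear.smul_comp, Linear.comp_smul, f.comm]⟩
      one_smul := fun f => by ext; exact one_smul K f.f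
      mul_smul := fun r s f => by ext; exact mul_smul r s f.f
      smul_zero := fun r => by ext; exact smul_zero r
      smul_add := fun r f g => by ext; exact smul_add r f.f g.f
      add_smul := fun r s f => by ext; exact add_smul r s f.f
      zero_smul := fun f => by ext; exact zero_smul K f.f }
  smul_comp P Q R r f g := by ext; exact Linear.smul_comp _ _ _ r f.f g.f
  comp_smul P Q R f r g := by ext; exact Linear.comp_smul _ _ _ f.f r g.f

/-- The saturation `A^♮_⊕` of a `K`-category: the idempotent completion (Karoubi
envelope) of its additive hull (matrix category). -/
abbrev Saturation (A : Type w) [Category.{v} A] [Preadditive A] :=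
  Karoubi (Mat_ A)

/-- The canonical embedding `ι_A : A ⥤ A^♮_⊕`. -/
noncomputable def satEmbedding : A ⥤ Saturation A :=
  Mat_.embedding A ⋙ toKaroubi (Mat_ A)

/-- The functor `F^♮_⊕` between saturations induced by an additive functor. -/
noncomputable def satFunctor {A : Type w} {B : Type w'} [Category.{v} A] [Category.{v} B]
    [Preadditive A] [Preadditive B] (F : A ⥤ B) [F.Additive] :
    Saturation A ⥤ Saturation B :=
  (functorExtension₂ _ _).obj F.mapMat_

end Saturation

/-- The closure of a class of objects of a preadditive category under finite
direct sums and retracts. -/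
inductive AddClosure {B : Type*} [Category B] [Preadditive B] (S : Set B) : B → Prop
  | base {x : B} : x ∈ S → AddClosure S x
  | sum {x y : B} (b : BinaryBicone x y) (hb : b.IsBilimit) :
      AddClosure S x → AddClosure S y → AddClosure S b.pt
  | retract {x y : B} (i : x ⟶ y) (r : y ⟶ x) (hir : i ≫ r = 𝟙 x) :
      AddClosure S y → AddClosure S x

/-- A class of objects additively generates a preadditive category if its closure
under finite direct sums and retracts is everything. -/
def AdditivelyGenerates {B : Type*} [Category B] [Preadditive B] (S : Set B) : Prop :=
  ∀ x : B, AddClosure S x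

/-- A `K`-category is saturated if it has all finite direct sums and all
idempotents split. -/
def IsSaturated (D : Type*) [Category D] [Preadditive D] : Prop :=
  HasFiniteBiproducts D ∧ IsIdempotentComplete D

/-- The category `Fun_K(A, D)` of `K`-linear functors. -/
abbrev FunCat (A : Type w) (D : Type w') [Category.{v} A] [Category.{v} D]
    [Preadditive A] [Preadditive D] [Linear K A] [Linear K D] :=
  ObjectProperty.FullSubcategory (fun F : A ⥤ D => IsKLinear K F)

/-- Restriction `Fun_K(B, D) ⥤ Fun_K(A, D)` along a `K`-linear functor `F : A ⥤ B`. -/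
def funRes {A : Type w} {B : Type w'} {D : Type*} [Category.{v} A] [Category.{v} B]
    [Category.{v} D] [Preadditive A] [Preadditive B] [Preadditive D]
    [Linear K A] [Linear K B] [Linear K D] (F : A ⥤ B) [F.Additive] [F.Linear K] :
    FunCat K B D ⥤ FunCat K A D :=
  ObjectProperty.lift _
    (ObjectProperty.ι _ ⋙ (Functor.whiskeringLeft A B D).obj F)
    (fun G => by
      obtain ⟨a, l⟩ := G.property
      haveI := a; haveI := l
      exact ⟨inferInstanceAs (F ⋙ G.obj).Additive, inferInstanceAs ((F ⋙ G.obj).Linear K)⟩)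

section Extension

variable {A B D : Type*} [Category A] [Category B] [Category D]

lemma naturality_of_full {F : A ⥤ B} [F.Full] {G H : B ⥤ D} (γ : F ⋙ G ⟶ F ⋙ H) {x y : A}
    (f : F.obj x ⟶ F.obj y) : G.map f ≫ γ.app y = γ.app x ≫ H.map f := by
  simpa using γ.naturality (F.preimage f)

variable [Preadditive B] [Preadditive D]

/-- A splitting of `b` off the direct sum `⨁ i, F.obj (obj i)`, recorded as a decomposition
of `𝟙 b` so that no biproduct needs to be chosen. -/
structure IdentityDecomposition (F : A ⥤ B) (b : B) where
  ι : Type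
  [fintype : Fintype ι]
  obj : ι → A
  π : ∀ i, b ⟶ F.obj (obj i)
  σ : ∀ i, F.obj (obj i) ⟶ b
  sum_π_σ : ∑ i, π i ≫ σ i = 𝟙 b

attribute [instance] IdentityDecomposition.fintype

namespace IdentityDecomposition

variable {F : A ⥤ B}

def single (x : A) : IdentityDecomposition F (F.obj x) where
  ι := PUnit
  obj _ := x
  π _ := 𝟙 _
  σ _ := 𝟙 _
  sum_π_σ := by simp

def binaryBilimit {x y : B} {c : BinaryBicone x y} (hc : c.IsBilimit)
    (dx : IdentityDecomposition F x) (dy : IdentityDecomposition F y) :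
    IdentityDecomposition F c.pt where
  ι := dx.ι ⊕ dy.ι
  obj
    | .inl i => dx.obj i
    | .inr j => dy.obj j
  π
    | .inl i => c.fst ≫ dx.π i
    | .inr j => c.snd ≫ dy.π j
  σ
    | .inl i => dx.σ i ≫ c.inl
    | .inr j => dy.σ j ≫ c.inr
  sum_π_σ := by
    simp only [Fintype.sum_sum_type, Category.assoc]
    simp only [← Category.assoc (dx.π _), ← Category.assoc (dy.π _), ← Preadditive.comp_sum,
      ← Preadditive.sum_comp, sum_π_σ, Category.id_comp]
    exact IsBilimit.binary_total hc

def retract {x y : B} (i : x ⟶ y) (r : y ⟶ x) (hir : i ≫ r = 𝟙 x)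
    (d : IdentityDecomposition F y) : IdentityDecomposition F x where
  ι := d.ι
  obj := d.obj
  π j := i ≫ d.π j
  σ j := d.σ j ≫ r
  sum_π_σ := by
    simp only [Category.assoc, ← Preadditive.comp_sum]
    simp only [← Category.assoc, ← Preadditive.sum_comp, sum_π_σ, Category.id_comp, hir]

theorem nonempty_of_addClosure {b : B} (hb : AddClosure (Set.range F.obj) b) :
    Nonempty (IdentityDecomposition F b) := by
  induction hb with
  | base hx =>
    obtain ⟨x, rfl⟩ := hx
    exact ⟨single x⟩
  | sum _ hc _ _ ihx ihy => exact ⟨binaryBilimit hc ihx.some ihy.some⟩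
  | retract i r hir _ ih => exact ⟨retract i r hir ih.some⟩

lemma sum_map_π_map_σ {b : B} (d : IdentityDecomposition F b) (G : B ⥤ D) [G.Additive] :
    ∑ i, G.map (d.π i) ≫ G.map (d.σ i) = 𝟙 (G.obj b) := by
  simp only [← G.map_comp, ← G.map_sum, sum_π_σ, G.map_id]

end IdentityDecomposition

open IdentityDecomposition

variable {F : A ⥤ B} {G H : B ⥤ D}

def extendApp (γ : F ⋙ G ⟶ F ⋙ H) {b : B} (d : IdentityDecomposition F b) :
    G.obj b ⟶ H.obj b :=
  ∑ i, G.map (d.π i) ≫ γ.app (d.obj i) ≫ H.map (d.σ i)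

/-- Both sides equal `∑ i j, G.map (d.π i) ≫ G.map (d.σ i ≫ h ≫ d'.π j) ≫ γ ≫ H.map (d'.σ j)`,
after moving the middle factor across `γ` by `naturality_of_full`. -/
lemma map_comp_extendApp [F.Full] [G.Additive] [H.Additive] (γ : F ⋙ G ⟶ F ⋙ H) {b b' : B}
    (d : IdentityDecomposition F b) (d' : IdentityDecomposition F b') (h : b ⟶ b') :
    G.map h ≫ extendApp γ d' = extendApp γ d ≫ H.map h := by
  calc G.map h ≫ extendApp γ d'
      = (∑ i, G.map (d.π i) ≫ G.map (d.σ i)) ≫ G.map h ≫ extendApp γ d' := by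
        rw [sum_map_π_map_σ, Category.id_comp]
    _ = ∑ i, ∑ j, G.map (d.π i) ≫ G.map (d.σ i ≫ h ≫ d'.π j) ≫ γ.app (d'.obj j) ≫
          H.map (d'.σ j) := by
        simp only [extendApp, Preadditive.sum_comp, Preadditive.comp_sum, Functor.map_comp,
          Category.assoc]
        exact Finset.sum_comm
    _ = ∑ i, ∑ j, G.map (d.π i) ≫ γ.app (d.obj i) ≫ H.map (d.σ i ≫ h ≫ d'.π j) ≫
          H.map (d'.σ j) := by
        simp only [← Category.assoc, naturality_of_full]
    _ = extendApp γ d ≫ H.map h ≫ ∑ j, H.map (d'.π j) ≫ H.map (d'.σ j) := by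
        simp only [extendApp, Preadditive.sum_comp, Preadditive.comp_sum, Functor.map_comp,
          Category.assoc]
        exact Finset.sum_comm
    _ = extendApp γ d ≫ H.map h := by
        rw [sum_map_π_map_σ, Category.comp_id]

lemma extendApp_single (γ : F ⋙ G ⟶ F ⋙ H) (x : A) :
    extendApp γ (single (F := F) x) = γ.app x := by
  show ∑ _ : PUnit, G.map (𝟙 _) ≫ γ.app x ≫ H.map (𝟙 _) = _
  simp

lemma extendApp_whiskerLeft [H.Additive] (α : G ⟶ H) {b : B} (d : IdentityDecomposition F b) :
    extendApp (Functor.whiskerLeft F α) d = α.app b := by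
  simp only [extendApp, Functor.whiskerLeft_app, NatTrans.naturality_assoc, ← Preadditive.comp_sum,
    sum_map_π_map_σ, Category.comp_id]

def extend [F.Full] [G.Additive] [H.Additive] (γ : F ⋙ G ⟶ F ⋙ H)
    (d : ∀ b, IdentityDecomposition F b) : G ⟶ H where
  app b := extendApp γ (d b)
  naturality _ _ h := map_comp_extendApp γ (d _) (d _) h

lemma whiskerLeft_extend [F.Full] [G.Additive] [H.Additive] (γ : F ⋙ G ⟶ F ⋙ H)
    (d : ∀ b, IdentityDecomposition F b) : Functor.whiskerLeft F (extend γ d) = γ := by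
  ext x
  simpa [extend, extendApp_single] using map_comp_extendApp γ (single x) (d (F.obj x)) (𝟙 _)

theorem whiskerLeft_bijective_of_additivelyGenerates [F.Full]
    (hgen : AdditivelyGenerates (Set.range F.obj)) [G.Additive] [H.Additive] :
    Function.Bijective (fun α : G ⟶ H => Functor.whiskerLeft F α) := by
  have d := fun b => (nonempty_of_addClosure (hgen b)).some
  refine ⟨fun α β hαβ => ?_, fun γ => ⟨extend γ d, whiskerLeft_extend γ d⟩⟩
  ext b
  rw [← extendApp_whiskerLeft α (d b), ← extendApp_whiskerLeft β (d b)]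
  exact congrArg (extendApp · (d b)) hαβ

end Extension

theorem funRes_fullyFaithful_general
    (K : Type u) [CommRing K] {A B : Type v} [Category.{v} A] [Category.{v} B]
    [Preadditive A] [Linear K A] [Preadditive B] [Linear K B]
    {D : Type w'} [Category.{v} D] [Preadditive D] [Linear K D]
    (F : A ⥤ B) [F.Additive] [F.Linear K] (hfull : F.Full)
    (hgen : AdditivelyGenerates (Set.range F.obj)) :
    (funRes K (D := D) F).Full ∧ (funRes K (D := D) F).Faithful := by
  have bij (G H : FunCat K B D) :
      Function.Bijective (fun α : G.obj ⟶ H.obj => Functor.whiskerLeft F α) :=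
    have := G.property.1
    have := H.property.1
    whiskerLeft_bijective_of_additivelyGenerates (G := G.obj) (H := H.obj) hgen
  refine ⟨⟨fun {G H} γ => ?_⟩, ⟨fun {G H} α β hαβ => ?_⟩⟩
  · obtain ⟨α, hα⟩ := (bij G H).2 γ.hom
    exact ⟨ObjectProperty.homMk α, ObjectProperty.hom_ext _ hα⟩
  · exact ObjectProperty.hom_ext _ ((bij G H).1 (congrArg (·.hom) hαβ))

/-- Restriction along a fully faithful functor whose image additively generates
the target is fully faithful, for functors into a saturated category. -/
theorem funRes_fullyFaithful
    (K : Type u) [CommRing K] {A B : Type v} [Category.{v} A] [Category.{v} B]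
    [Preadditive A] [Linear K A] [Preadditive B] [Linear K B]
    {D : Type w'} [Category.{v} D] [Preadditive D] [Linear K D] (hD : IsSaturated D)
    (F : A ⥤ B) [F.Additive] [F.Linear K] (hfull : F.Full) (hfaithful : F.Faithful)
    (hgen : AdditivelyGenerates (Set.range F.obj)) :
    (funRes K (D := D) F).Full ∧ (funRes K (D := D) F).Faithful :=
  funRes_fullyFaithful_general K F hfull hgen

end Morita
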